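/- Let \(A \in \mathbf{R}^{n\times n}\), \(B\in\mathbf{R}^{n\times q}\), \(C\in\mathbf{R}^{m\times n}\), and \(\gamma>0\). Suppose there exists a symmetric positive definite matrix \(X\) such that \(A^T X + X A + \tfrac{1}{\gamma^2} X B B^T X + C^T C < 0\) (i.e., this matrix is negative definite). Then \(A\) is Hurwitz stable: every eigenvalue of \(A\) has negative real part. -/

import Mathlib

/-!
If `A v = μ v` with `v ≠ 0` complex, the Hermitian form of `Aᵀ X + X A` at `v` equals
`2 Re μ · v* X v`. The inequality makes `Aᵀ X + X A` negative definite, because the terms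
`γ⁻² X B Bᵀ X` and `Cᵀ C` are positive semidefinite, while `v* X v > 0`; hence `Re μ < 0`.
-/

open Matrix

/-- A real square matrix is Hurwitz stable if all its complex eigenvalues
have strictly negative real part. -/
def Hurwitz {n : ℕ} (A : Matrix (Fin n) (Fin n) ℝ) : Prop :=
  ∀ μ : ℂ, ((A.map (Complex.ofReal)) - μ • 1).det = 0 → μ.re < 0

/-- `M < 0`: symmetric negative definite. -/
def NegDef {n : ℕ} (M : Matrix (Fin n) (Fin n) ℝ) : Prop := (-M).PosDef

open scoped ComplexOrder

namespace Matrix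

variable {ι 𝕜 : Type*} [Fintype ι] [RCLike 𝕜]

theorem re_star_dotProduct_map_ofReal_mulVec (M : Matrix ι ι ℝ) (v : ι → 𝕜) :
    RCLike.re (star v ⬝ᵥ M.map ((↑) : ℝ → 𝕜) *ᵥ v) =
      (fun i ↦ RCLike.re (v i)) ⬝ᵥ M *ᵥ (fun i ↦ RCLike.re (v i)) +
        (fun i ↦ RCLike.im (v i)) ⬝ᵥ M *ᵥ (fun i ↦ RCLike.im (v i)) := by
  simp only [dotProduct, mulVec, map_apply, Pi.star_apply, RCLike.star_def, map_sum,
    Finset.mul_sum, ← Finset.sum_add_distrib]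
  refine Finset.sum_congr rfl fun i _ ↦ Finset.sum_congr rfl fun j _ ↦ ?_
  simp only [RCLike.mul_re, RCLike.conj_re, RCLike.conj_im, RCLike.ofReal_re, RCLike.ofReal_im,
    RCLike.im_ofReal_mul]
  ring

theorem PosDef.map_ofReal {M : Matrix ι ι ℝ} (hM : M.PosDef) :
    (M.map ((↑) : ℝ → 𝕜)).PosDef := by
  have hHerm : (M.map ((↑) : ℝ → 𝕜)).IsHermitian :=
    hM.isHermitian.map _ fun x ↦ (RCLike.conj_ofReal x).symm
  refine .of_dotProduct_mulVec_pos hHerm fun v hv ↦ RCLike.pos_iff.mpr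
    ⟨?_, hHerm.im_star_dotProduct_mulVec_self v⟩
  rw [re_star_dotProduct_map_ofReal_mulVec]
  have hpos {w : ι → ℝ} (hw : w ≠ 0) : 0 < w ⬝ᵥ M *ᵥ w := by
    simpa using hM.dotProduct_mulVec_pos hw
  have hnonneg (w : ι → ℝ) : 0 ≤ w ⬝ᵥ M *ᵥ w := by
    simpa using hM.posSemidef.dotProduct_mulVec_nonneg w
  obtain hne | hne : (fun i ↦ RCLike.re (v i)) ≠ 0 ∨ (fun i ↦ RCLike.im (v i)) ≠ 0 := by
    by_contra! h
    exact hv <| funext fun i ↦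
      RCLike.ext (by simpa using congrFun h.1 i) (by simpa using congrFun h.2 i)
  · linarith [hpos hne, hnonneg fun i ↦ RCLike.im (v i)]
  · linarith [hpos hne, hnonneg fun i ↦ RCLike.re (v i)]

theorem PosDef.re_neg_of_lyapunov {A X : Matrix ι ι 𝕜} (hX : X.PosDef)
    (hL : (-(Aᴴ * X + X * A)).PosDef) {μ : 𝕜} {v : ι → 𝕜} (hv : v ≠ 0)
    (hAv : A *ᵥ v = μ • v) : RCLike.re μ < 0 := by
  have hs : 0 < RCLike.re (star v ⬝ᵥ X *ᵥ v) :=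
    (RCLike.pos_iff.mp (hX.dotProduct_mulVec_pos hv)).1
  have hquad :
      star v ⬝ᵥ (Aᴴ * X + X * A) *ᵥ v = (2 * RCLike.re μ : ℝ) * (star v ⬝ᵥ X *ᵥ v) := by
    rw [add_mulVec, dotProduct_add, ← mulVec_mulVec, ← mulVec_mulVec, dotProduct_mulVec,
      ← star_mulVec, hAv, mulVec_smul, star_smul, smul_dotProduct, dotProduct_smul,
      smul_eq_mul, smul_eq_mul, ← add_mul, RCLike.star_def, add_comm, RCLike.add_conj]
    push_cast
    ring
  have hneg : 2 * RCLike.re μ * RCLike.re (star v ⬝ᵥ X *ᵥ v) < 0 := by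
    have := (RCLike.pos_iff.mp (hL.dotProduct_mulVec_pos hv)).1
    rwa [neg_mulVec, dotProduct_neg, map_neg, hquad, RCLike.re_ofReal_mul, neg_pos] at this
  linarith [neg_of_mul_neg_left hneg hs.le]

end Matrix

theorem NegDef.of_add_posSemidef {n : ℕ} {M P : Matrix (Fin n) (Fin n) ℝ} (h : NegDef (M + P))
    (hP : P.PosSemidef) : NegDef M := by
  simpa [NegDef] using PosDef.add_posSemidef h hP

theorem hurwitz_of_lyapunov {n : ℕ} {A X : Matrix (Fin n) (Fin n) ℝ} (hX : X.PosDef)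
    (hL : NegDef (Aᵀ * X + X * A)) : Hurwitz A := by
  intro μ hdet
  obtain ⟨v, hv, hAv⟩ := exists_mulVec_eq_zero_iff.mpr hdet
  rw [sub_mulVec, sub_eq_zero, smul_mulVec, one_mulVec] at hAv
  refine (hX.map_ofReal (𝕜 := ℂ)).re_neg_of_lyapunov (A := A.map (↑)) ?_ hv hAv
  convert hL.map_ofReal (𝕜 := ℂ) using 1
  ext i j
  simp [Matrix.mul_apply, conjTranspose_apply]

theorem bounded_real_lemma_stability_general {n q m : ℕ}
    (A : Matrix (Fin n) (Fin n) ℝ) (B : Matrix (Fin n) (Fin q) ℝ)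
    (C : Matrix (Fin m) (Fin n) ℝ) (γ : ℝ)
    (X : Matrix (Fin n) (Fin n) ℝ) (hX : X.PosDef)
    (hlmi : NegDef (Aᵀ * X + X * A + (γ ^ 2)⁻¹ • (X * B * Bᵀ * X) + Cᵀ * C)) :
    Hurwitz A := by
  have hXBBX : (X * B * Bᵀ * X).PosSemidef := by
    simpa [show Xᵀ = X from hX.1, Matrix.mul_assoc] using
      (posSemidef_self_mul_conjTranspose B).conjTranspose_mul_mul_same X
  refine hurwitz_of_lyapunov hX <| (hlmi.of_add_posSemidef ?_).of_add_posSemidef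
    (hXBBX.smul (by positivity))
  simpa using posSemidef_conjTranspose_mul_self C

theorem bounded_real_lemma_stability {n q m : ℕ}
    (A : Matrix (Fin n) (Fin n) ℝ) (B : Matrix (Fin n) (Fin q) ℝ)
    (C : Matrix (Fin m) (Fin n) ℝ) (γ : ℝ) (hγ : 0 < γ)
    (X : Matrix (Fin n) (Fin n) ℝ) (hX : X.PosDef)
    (hlmi : NegDef (Aᵀ * X + X * A + (γ ^ 2)⁻¹ • (X * B * Bᵀ * X) + Cᵀ * C)) :
    Hurwitz A :=
  bounded_real_lemma_stability_general A B C γ X hX hlmi
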